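/- arXiv:2101.05563 — 2 statements merged into one kernel-verified Lean document; each statement's English description precedes it below -/
import Mathlib

section
/- If a radiotherapy dose acts on a density n(z) by multiplication with a survival fraction SF(z) that is strictly increasing in z (resistant differentiated cells), and n has positive mass on both [0, z*] and [z*, 1], then the post-treatment stem fraction is strictly smaller than the pre-treatment stem fraction: (∫₀^{z*} SF·n)/(∫₀¹ SF·n) < (∫₀^{z*} n)/(∫₀¹ n). Symmetrically, if SF is strictly decreasing in z (resistant stem cells), the post-treatment stem fraction strictly increases. -/
/-!
Split `[0, 1]` at `z*`; let `A, B` be the masses of `n` on `[0, z*]` and `[z*, 1]`, and `A', B'`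
those of `SF · n`. If `SF` is strictly increasing, then `SF < SF z*` on `(0, z*)` and `SF > SF z*`
on `(z*, 1)`, so `A' < SF z* · A` and `SF z* · B < B'`. Hence `A' B < A B'`, which is
`A' / (A' + B') < A / (A + B)` after cross-multiplying. The decreasing case is symmetric.
-/

open MeasureTheory Set

section Fraction

variable {K : Type*} [Field K] [LinearOrder K] [IsStrictOrderedRing K] {a b a' b' c : K}

theorem div_add_lt_div_add_of_lt_mul_of_mul_lt (ha : 0 < a) (hb : 0 < b)
    (hab' : 0 < a' + b') (ha' : a' < c * a) (hb' : c * b < b') :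
    a' / (a' + b') < a / (a + b) := by
  rw [div_lt_div_iff₀ hab' (by positivity)]
  nlinarith [mul_lt_mul_of_pos_right ha' hb, mul_lt_mul_of_pos_left hb' ha]

theorem div_add_lt_div_add_of_mul_lt_of_lt_mul (ha : 0 < a) (hb : 0 < b)
    (hab' : 0 < a' + b') (ha' : c * a < a') (hb' : b' < c * b) :
    a / (a + b) < a' / (a' + b') := by
  rw [div_lt_div_iff₀ (by positivity) hab']
  nlinarith [mul_lt_mul_of_pos_right ha' hb, mul_lt_mul_of_pos_left hb' ha]

end Fraction

theorem integral_mul_pos_of_ae_pos {α : Type*} [MeasurableSpace α] {μ : Measure α}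
    {w n : α → ℝ} (hw : ∀ᵐ x ∂μ, 0 < w x) (hn : 0 ≤ᵐ[μ] n)
    (hwn : Integrable (fun x => w x * n x) μ) (h : 0 < ∫ x, n x ∂μ) :
    0 < ∫ x, w x * n x ∂μ := by
  have hwn_nonneg : 0 ≤ᵐ[μ] fun x => w x * n x := by
    filter_upwards [hw, hn] with x hwx hnx using mul_nonneg hwx.le hnx
  rw [integral_pos_iff_support_of_nonneg_ae hn (.of_integral_ne_zero h.ne')] at h
  rw [integral_pos_iff_support_of_nonneg_ae hwn_nonneg hwn]
  refine h.trans_le (measure_mono_ae ?_)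
  filter_upwards [hw] with x hwx hnx
  exact mul_ne_zero hwx.ne' hnx

namespace intervalIntegral

variable {μ : Measure ℝ} [NullSingletonClass μ] {w n : ℝ → ℝ} {a b c : ℝ}

theorem integral_mul_pos_of_pos_on_Ioo (hab : a ≤ b) (hw : ∀ x ∈ Ioo a b, 0 < w x)
    (hn : ∀ x ∈ Ioo a b, 0 ≤ n x) (hwn : IntervalIntegrable (fun x => w x * n x) μ a b)
    (h : 0 < ∫ x in a..b, n x ∂μ) : 0 < ∫ x in a..b, w x * n x ∂μ := by
  rw [integral_of_le hab, integral_Ioc_eq_integral_Ioo] at h ⊢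
  exact integral_mul_pos_of_ae_pos (ae_restrict_of_forall_mem measurableSet_Ioo hw)
    (ae_restrict_of_forall_mem measurableSet_Ioo hn)
    (((intervalIntegrable_iff_integrableOn_Ioc_of_le hab).1 hwn).mono_set Ioo_subset_Ioc_self) h

theorem integral_mul_lt_const_mul_integral (hab : a ≤ b) (hw : ∀ x ∈ Ioo a b, w x < c)
    (hn : ∀ x ∈ Ioo a b, 0 ≤ n x) (hwn : IntervalIntegrable (fun x => w x * n x) μ a b)
    (h : 0 < ∫ x in a..b, n x ∂μ) :
    ∫ x in a..b, w x * n x ∂μ < c * ∫ x in a..b, n x ∂μ := by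
  have hcn := (intervalIntegrable_of_integral_ne_zero h.ne').const_mul c
  have hpos := integral_mul_pos_of_pos_on_Ioo hab (w := fun x => c - w x)
    (fun x hx => sub_pos.2 (hw x hx)) hn (by simpa only [sub_mul] using hcn.sub hwn) h
  simp only [sub_mul] at hpos
  rw [integral_sub hcn hwn, integral_const_mul] at hpos
  linarith

theorem const_mul_integral_lt_integral_mul (hab : a ≤ b) (hw : ∀ x ∈ Ioo a b, c < w x)
    (hn : ∀ x ∈ Ioo a b, 0 ≤ n x) (hwn : IntervalIntegrable (fun x => w x * n x) μ a b)
    (h : 0 < ∫ x in a..b, n x ∂μ) :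
    c * ∫ x in a..b, n x ∂μ < ∫ x in a..b, w x * n x ∂μ := by
  have hcn := (intervalIntegrable_of_integral_ne_zero h.ne').const_mul c
  have hpos := integral_mul_pos_of_pos_on_Ioo hab (w := fun x => w x - c)
    (fun x hx => sub_pos.2 (hw x hx)) hn (by simpa only [sub_mul] using hwn.sub hcn) h
  simp only [sub_mul] at hpos
  rw [integral_sub hwn hcn, integral_const_mul] at hpos
  linarith

end intervalIntegral

/-- Radiotherapy reweighting and the stem fraction: if the survival fraction `SF`
is strictly increasing on `[0,1]` the post-treatment stem fraction strictly
decreases; if `SF` is strictly decreasing it strictly increases. -/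
theorem stem_fraction_shift
    (n SF : ℝ → ℝ) (zs : ℝ) (hzs : zs ∈ Ioo (0:ℝ) 1)
    (hn : ∀ z ∈ Icc (0:ℝ) 1, 0 ≤ n z)
    (hint : IntervalIntegrable n MeasureTheory.volume 0 1)
    (hSFpos : ∀ z ∈ Icc (0:ℝ) 1, 0 < SF z)
    (hSFcont : ContinuousOn SF (Icc 0 1))
    (hmass1 : 0 < ∫ z in (0:ℝ)..zs, n z)
    (hmass2 : 0 < ∫ z in zs..1, n z) :
    (StrictMonoOn SF (Icc 0 1) →
      (∫ z in (0:ℝ)..zs, SF z * n z) / (∫ z in (0:ℝ)..1, SF z * n z)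
        < (∫ z in (0:ℝ)..zs, n z) / (∫ z in (0:ℝ)..1, n z)) ∧
    (StrictAntiOn SF (Icc 0 1) →
      (∫ z in (0:ℝ)..zs, n z) / (∫ z in (0:ℝ)..1, n z)
        < (∫ z in (0:ℝ)..zs, SF z * n z) / (∫ z in (0:ℝ)..1, SF z * n z)) := by
  obtain ⟨h0, h1⟩ := hzs
  have hzs : zs ∈ Icc (0:ℝ) 1 := ⟨h0.le, h1.le⟩
  have hsubL : uIcc 0 zs ⊆ uIcc 0 1 := uIcc_subset_uIcc_left (Icc_subset_uIcc hzs)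
  have hsubR : uIcc zs 1 ⊆ uIcc 0 1 := uIcc_subset_uIcc_right (Icc_subset_uIcc hzs)
  have hsplit {f : ℝ → ℝ} (hf : IntervalIntegrable f volume 0 1) :
      ∫ z in (0:ℝ)..1, f z = (∫ z in (0:ℝ)..zs, f z) + ∫ z in zs..1, f z :=
    (intervalIntegral.integral_add_adjacent_intervals (hf.mono_set hsubL)
      (hf.mono_set hsubR)).symm
  have hSFn : IntervalIntegrable (fun z => SF z * n z) volume 0 1 :=
    hint.continuousOn_mul (by rwa [uIcc_of_le zero_le_one])
  have hSFn_pos : 0 < ∫ z in (0:ℝ)..1, SF z * n z :=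
    intervalIntegral.integral_mul_pos_of_pos_on_Ioo zero_le_one
      (fun z hz => hSFpos z (Ioo_subset_Icc_self hz))
      (fun z hz => hn z (Ioo_subset_Icc_self hz)) hSFn (by rw [hsplit hint]; positivity)
  have hL {z} (hz : z ∈ Ioo 0 zs) : z ∈ Icc (0:ℝ) 1 := ⟨hz.1.le, hz.2.le.trans h1.le⟩
  have hR {z} (hz : z ∈ Ioo zs 1) : z ∈ Icc (0:ℝ) 1 := ⟨h0.le.trans hz.1.le, hz.2.le⟩
  have hnL : ∀ z ∈ Ioo 0 zs, 0 ≤ n z := fun z hz => hn z (hL hz)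
  have hnR : ∀ z ∈ Ioo zs 1, 0 ≤ n z := fun z hz => hn z (hR hz)
  rw [hsplit hSFn] at hSFn_pos
  rw [hsplit hint, hsplit hSFn]
  refine ⟨fun hSF => ?_, fun hSF => ?_⟩
  · exact div_add_lt_div_add_of_lt_mul_of_mul_lt hmass1 hmass2 hSFn_pos
      (intervalIntegral.integral_mul_lt_const_mul_integral h0.le
        (fun z hz => hSF (hL hz) hzs hz.2) hnL (hSFn.mono_set hsubL) hmass1)
      (intervalIntegral.const_mul_integral_lt_integral_mul h1.le
        (fun z hz => hSF hzs (hR hz) hz.1) hnR (hSFn.mono_set hsubR) hmass2)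
  · exact div_add_lt_div_add_of_mul_lt_of_lt_mul hmass1 hmass2 hSFn_pos
      (intervalIntegral.const_mul_integral_lt_integral_mul h0.le
        (fun z hz => hSF (hL hz) hzs hz.2) hnL (hSFn.mono_set hsubL) hmass1)
      (intervalIntegral.integral_mul_lt_const_mul_integral h1.le
        (fun z hz => hSF hzs (hR hz) hz.1) hnR (hSFn.mono_set hsubR) hmass2)
end

section
/- If a dose of radiotherapy maps n(z) to SF(z)·n(z) with SF(z) = exp(-α(z)d - β(z)d²) and α, β strictly increasing continuous functions on [0,1], and the measure n dz is not concentrated at a single point, then the phenotypic mean strictly decreases: (∫₀¹ z·SF(z)n(z) dz)/(∫₀¹ SF(z)n(z) dz) < (∫₀¹ z·n(z) dz)/(∫₀¹ n(z) dz). -/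
/-!
Let `m` be the mean of `z` under `n`. Since `SF` is strictly decreasing,
`(SF z - SF m) (m - z) ≥ 0`, with equality only at `z = m`. Integrating against `n dz`, which has
positive mass and no atoms, and using `∫ (m - z) n = 0` gives `m ∫ SF n - ∫ z SF n > 0`, which is
the claim after dividing by `∫ SF n > 0`.
-/

open MeasureTheory Set

section StrictChebyshev

variable {μ : Measure ℝ} {s : Set ℝ} {n w : ℝ → ℝ} {m : ℝ}

theorem setIntegral_pos_of_strictAntiOn [NullSingletonClass μ] (hs : MeasurableSet s)
    (hw : StrictAntiOn w s) (hm : m ∈ s) (hn : ∀ x ∈ s, 0 ≤ n x)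
    (hpos : 0 < ∫ x in s, n x ∂μ)
    (hG : IntegrableOn (fun x => (w x - w m) * (m - x) * n x) s μ) :
    0 < ∫ x in s, (w x - w m) * (m - x) * n x ∂μ := by
  have hG_nonneg : ∀ x ∈ s, 0 ≤ (w x - w m) * (m - x) * n x := by
    intro x hx
    refine mul_nonneg ?_ (hn x hx)
    rcases lt_trichotomy x m with h | rfl | h
    · exact mul_nonneg (sub_nonneg.2 (hw hx hm h).le) (sub_nonneg.2 h.le)
    · simp
    · exact mul_nonneg_of_nonpos_of_nonpos (sub_nonpos.2 (hw hm hx h).le) (sub_nonpos.2 h.le)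
  have hn_supp : 0 < μ (Function.support n ∩ s) :=
    (setIntegral_pos_iff_support_of_nonneg_ae (ae_restrict_of_forall_mem hs hn)
      (Integrable.of_integral_ne_zero hpos.ne')).1 hpos
  rw [setIntegral_pos_iff_support_of_nonneg_ae (ae_restrict_of_forall_mem hs hG_nonneg) hG]
  -- `μ` has no atoms, so removing the point `m`, where the integrand vanishes, costs nothing.
  calc 0 < μ (Function.support n ∩ s) := hn_supp
    _ = μ ((Function.support n ∩ s) \ {m}) := (measure_sdiff_null (measure_singleton m)).symm
    _ ≤ _ := by
      refine measure_mono fun x ⟨⟨hnx, hx⟩, (hxm : x ≠ m)⟩ => ⟨?_, hx⟩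
      have hwx : w x ≠ w m := hw.injOn.ne hx hm hxm
      exact mul_ne_zero (mul_ne_zero (sub_ne_zero.2 hwx) (sub_ne_zero.2 hxm.symm)) hnx

theorem setIntegral_mul_lt_of_strictAntiOn [NullSingletonClass μ] (hs : MeasurableSet s)
    (hw : StrictAntiOn w s) (hm : m ∈ s) (hn : ∀ x ∈ s, 0 ≤ n x)
    (hpos : 0 < ∫ x in s, n x ∂μ) (hmean : ∫ x in s, x * n x ∂μ = m * ∫ x in s, n x ∂μ)
    (hxn : IntegrableOn (fun x => x * n x) s μ) (hwn : IntegrableOn (fun x => w x * n x) s μ)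
    (hxwn : IntegrableOn (fun x => x * w x * n x) s μ) :
    ∫ x in s, x * w x * n x ∂μ < m * ∫ x in s, w x * n x ∂μ := by
  have hn_int : IntegrableOn n s μ := Integrable.of_integral_ne_zero hpos.ne'
  have hexpand : (fun x => (w x - w m) * (m - x) * n x) =
      fun x => (m * (w x * n x) - x * w x * n x) - w m * (m * n x - x * n x) := by
    funext x; ring
  have h₁ : IntegrableOn (fun x => m * (w x * n x) - x * w x * n x) s μ :=
    (hwn.const_mul m).sub hxwn
  have h₂ : IntegrableOn (fun x => m * n x - x * n x) s μ := (hn_int.const_mul m).sub hxn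
  have hG := setIntegral_pos_of_strictAntiOn hs hw hm hn hpos (μ := μ)
    (by rw [hexpand]; exact h₁.sub (h₂.const_mul (w m)))
  rw [hexpand, integral_sub h₁ (h₂.const_mul (w m)), integral_sub (hwn.const_mul m) hxwn,
    integral_const_mul, integral_const_mul, integral_sub (hn_int.const_mul m) hxn,
    integral_const_mul, hmean] at hG
  linarith

theorem div_setIntegral_mem_Icc {a b : ℝ} (hs : MeasurableSet s) (hsab : s ⊆ Icc a b)
    (hn : ∀ x ∈ s, 0 ≤ n x) (hpos : 0 < ∫ x in s, n x ∂μ)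
    (hxn : IntegrableOn (fun x => x * n x) s μ) :
    (∫ x in s, x * n x ∂μ) / ∫ x in s, n x ∂μ ∈ Icc a b := by
  have hn_int : IntegrableOn n s μ := Integrable.of_integral_ne_zero hpos.ne'
  constructor
  · rw [le_div_iff₀ hpos, ← integral_const_mul]
    exact setIntegral_mono_on (hn_int.const_mul a) hxn hs fun x hx =>
      mul_le_mul_of_nonneg_right (hsab hx).1 (hn x hx)
  · rw [div_le_iff₀ hpos, ← integral_const_mul]
    exact setIntegral_mono_on hxn (hn_int.const_mul b) hs fun x hx =>
      mul_le_mul_of_nonneg_right (hsab hx).2 (hn x hx)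

theorem div_setIntegral_Icc_lt_of_strictAntiOn [NullSingletonClass μ] {a b : ℝ}
    (hw : StrictAntiOn w (Icc a b)) (hw₀ : ∀ x ∈ Icc a b, 0 < w x)
    (hn : ∀ x ∈ Icc a b, 0 ≤ n x) (hpos : 0 < ∫ x in Icc a b, n x ∂μ) :
    (∫ x in Icc a b, x * w x * n x ∂μ) / (∫ x in Icc a b, w x * n x ∂μ)
      < (∫ x in Icc a b, x * n x ∂μ) / ∫ x in Icc a b, n x ∂μ := by
  have hab : a ≤ b := by
    by_contra h
    simp [Icc_eq_empty h] at hpos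
  have hn_int : IntegrableOn n (Icc a b) μ := Integrable.of_integral_ne_zero hpos.ne'
  have hw_bdd : MemLp w ⊤ (μ.restrict (Icc a b)) :=
    hw.antitoneOn.memLp_top (isLeast_Icc hab) (isGreatest_Icc hab) measurableSet_Icc
  have hid_bdd : MemLp id ⊤ (μ.restrict (Icc a b)) :=
    monotoneOn_id.memLp_top (isLeast_Icc hab) (isGreatest_Icc hab) measurableSet_Icc
  have hxn : IntegrableOn (fun x => x * n x) (Icc a b) μ := hn_int.mul_of_top_right hid_bdd
  have hwn : IntegrableOn (fun x => w x * n x) (Icc a b) μ := hn_int.mul_of_top_right hw_bdd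
  have hxwn : IntegrableOn (fun x => x * w x * n x) (Icc a b) μ :=
    (hwn.mul_of_top_right hid_bdd).congr (ae_of_all _ fun x => (mul_assoc x (w x) (n x)).symm)
  have hwn_pos : 0 < ∫ x in Icc a b, w x * n x ∂μ := by
    have hb : b ∈ Icc a b := right_mem_Icc.2 hab
    calc 0 < w b * ∫ x in Icc a b, n x ∂μ := mul_pos (hw₀ b hb) hpos
      _ = ∫ x in Icc a b, w b * n x ∂μ := (integral_const_mul _ _).symm
      _ ≤ _ := setIntegral_mono_on (hn_int.const_mul _) hwn measurableSet_Icc fun x hx =>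
        mul_le_mul_of_nonneg_right (hw.antitoneOn hx hb hx.2) (hn x hx)
  have hm := div_setIntegral_mem_Icc measurableSet_Icc subset_rfl hn hpos hxn
  have hlt := setIntegral_mul_lt_of_strictAntiOn measurableSet_Icc hw hm hn hpos
    (div_mul_cancel₀ _ hpos.ne').symm hxn hwn hxwn
  rwa [div_lt_iff₀ hwn_pos]

end StrictChebyshev

noncomputable def survivalFraction (α β : ℝ → ℝ) (d z : ℝ) : ℝ :=
  Real.exp (-(α z * d + β z * d ^ 2))

theorem strictAntiOn_survivalFraction {α β : ℝ → ℝ} {s : Set ℝ} {d : ℝ} (hd : 0 < d)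
    (hα : StrictMonoOn α s) (hβ : StrictMonoOn β s) :
    StrictAntiOn (survivalFraction α β d) s := by
  intro x hx y hy hxy
  have := mul_lt_mul_of_pos_right (hα hx hy hxy) hd
  have := mul_lt_mul_of_pos_right (hβ hx hy hxy) (pow_pos hd 2)
  exact Real.exp_lt_exp.2 (by linarith)

theorem mean_strictly_decreases_general
    (n α β : ℝ → ℝ) (d : ℝ) (hd : 0 < d)
    (hα : StrictMonoOn α (Icc 0 1))
    (hβ : StrictMonoOn β (Icc 0 1))
    (hn : ∀ z ∈ Icc (0:ℝ) 1, 0 ≤ n z)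
    (hnondeg : ∃ c ∈ Ioo (0:ℝ) 1,
      0 < (∫ z in (0:ℝ)..c, n z) ∧ 0 < (∫ z in c..1, n z)) :
    (∫ z in (0:ℝ)..1, z * Real.exp (-(α z * d + β z * d^2)) * n z)
        / (∫ z in (0:ℝ)..1, Real.exp (-(α z * d + β z * d^2)) * n z)
      < (∫ z in (0:ℝ)..1, z * n z) / (∫ z in (0:ℝ)..1, n z) := by
  obtain ⟨c, -, hleft, hright⟩ := hnondeg
  have hpos : 0 < ∫ z in (0:ℝ)..1, n z := by
    rw [← intervalIntegral.integral_add_adjacent_intervals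
      (intervalIntegral.intervalIntegrable_of_integral_ne_zero hleft.ne')
      (intervalIntegral.intervalIntegrable_of_integral_ne_zero hright.ne')]
    exact add_pos hleft hright
  simp only [intervalIntegral.integral_of_le zero_le_one, ← integral_Icc_eq_integral_Ioc]
    at hpos ⊢
  exact div_setIntegral_Icc_lt_of_strictAntiOn (strictAntiOn_survivalFraction hd hα hβ)
    (fun _ _ => Real.exp_pos _) hn hpos

/-- Radiotherapy strictly decreases the phenotypic mean: reweighting a
non-degenerate density `n` on `[0,1]` by `SF(z) = exp(-α(z)d - β(z)d²)` with
`α, β` strictly increasing and continuous strictly decreases the mean of `z`. -/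
theorem mean_strictly_decreases
    (n α β : ℝ → ℝ) (d : ℝ) (hd : 0 < d)
    (hα : StrictMonoOn α (Icc 0 1)) (hαc : ContinuousOn α (Icc 0 1))
    (hβ : StrictMonoOn β (Icc 0 1)) (hβc : ContinuousOn β (Icc 0 1))
    (hn : ∀ z ∈ Icc (0:ℝ) 1, 0 ≤ n z)
    (hint : IntervalIntegrable n MeasureTheory.volume 0 1)
    (hnondeg : ∃ c ∈ Ioo (0:ℝ) 1,
      0 < (∫ z in (0:ℝ)..c, n z) ∧ 0 < (∫ z in c..1, n z)) :
    (∫ z in (0:ℝ)..1, z * Real.exp (-(α z * d + β z * d^2)) * n z)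
        / (∫ z in (0:ℝ)..1, Real.exp (-(α z * d + β z * d^2)) * n z)
      < (∫ z in (0:ℝ)..1, z * n z) / (∫ z in (0:ℝ)..1, n z) :=
  mean_strictly_decreases_general n α β d hd hα hβ hn hnondeg
end
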